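/- arXiv:math/0604526 — 2 statements merged into one kernel-verified Lean document; each statement's English description precedes it below -/
import Mathlib

section
/- Let g be a real number with -2 < g < 2, h = sqrt(1 - g²/4), G = g/h. Define Q(w) = 1 + g·w + w², Φ(w) = π/2 + arctan(G/2) - arctan((w + g/2)/h), and V(w) = sqrt(Q(w)) · exp((G/2)·Φ(w)). Then for every real w one has (1/2)·(V²)′(w) = w·V(w)²/Q(w), (1/2)·(V²)″(w) = (Q(w) - g·w)·V(w)²/Q(w)², and (1/4)·(V²)‴(w) = -g·V(w)²/Q(w)³. -/
/-!
Put `P = exp (G Φ)`, so that `V² = Q P`. Since `(w + g/2)² + h² = Q`, one has `Φ' = -h / Q`, and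
as `G h = g` this gives the first-order equation `P' = -g P / Q`. Everything follows from it:
`(Q P)' = Q' P - g P = 2 w P`, and two more differentiations, simplified using
`Q = 1 + g w + w²`, give the other two identities.
-/

open Real

lemma one_add_mul_add_sq_pos {g : ℝ} (hg₁ : -2 < g) (hg₂ : g < 2) (w : ℝ) :
    0 < 1 + g * w + w ^ 2 := by
  nlinarith [sq_nonneg (w + g / 2)]

lemma hasDerivAt_one_add_mul_add_sq (g w : ℝ) :
    HasDerivAt (fun w : ℝ => 1 + g * w + w ^ 2) (g + 2 * w) w := by
  simpa using (((hasDerivAt_id w).const_mul g).const_add 1).fun_add (hasDerivAt_pow 2 w)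

lemma hasDerivAt_arctan_add_div {c h : ℝ} (hh : h ≠ 0) (w : ℝ) :
    HasDerivAt (fun w => arctan ((w + c) / h)) (h / ((w + c) ^ 2 + h ^ 2)) w := by
  have hlin : HasDerivAt (fun w : ℝ => (w + c) / h) (1 / h) w := by
    simpa using ((hasDerivAt_id w).add_const c).div_const h
  refine ((hasDerivAt_arctan ((w + c) / h)).comp w hlin).congr_deriv ?_
  have : (w + c) ^ 2 + h ^ 2 ≠ 0 := by positivity
  field_simp
  ring

lemma hasDerivAt_exp_mul_sub_arctan {g h G c : ℝ} (hh : h ≠ 0) (hh2 : h ^ 2 = 1 - g ^ 2 / 4)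
    (hG : G = g / h) (w : ℝ) :
    HasDerivAt (fun w => exp (G * (c - arctan ((w + g / 2) / h))))
      (-g * exp (G * (c - arctan ((w + g / 2) / h))) / (1 + g * w + w ^ 2)) w := by
  have hQ : (w + g / 2) ^ 2 + h ^ 2 = 1 + g * w + w ^ 2 := by rw [hh2]; ring
  have hΦ := ((hasDerivAt_arctan_add_div (c := g / 2) hh w).const_sub c).const_mul G
  rw [hQ] at hΦ
  refine hΦ.exp.congr_deriv ?_
  rw [hG]
  field_simp

section
variable {g : ℝ} {P : ℝ → ℝ} {w : ℝ}

lemma hasDerivAt_one_add_mul_add_sq_mul (hP : HasDerivAt P (-g * P w / (1 + g * w + w ^ 2)) w)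
    (hQ : 1 + g * w + w ^ 2 ≠ 0) :
    HasDerivAt (fun w => (1 + g * w + w ^ 2) * P w) (2 * w * P w) w := by
  refine ((hasDerivAt_one_add_mul_add_sq g w).fun_mul hP).congr_deriv ?_
  field_simp
  ring

lemma hasDerivAt_two_mul_mul (hP : HasDerivAt P (-g * P w / (1 + g * w + w ^ 2)) w) :
    HasDerivAt (fun w => 2 * w * P w)
      (2 * P w - 2 * g * w * P w / (1 + g * w + w ^ 2)) w := by
  refine (((hasDerivAt_id' w).const_mul 2).fun_mul hP).congr_deriv ?_
  ring

lemma hasDerivAt_two_mul_sub_div (hP : HasDerivAt P (-g * P w / (1 + g * w + w ^ 2)) w)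
    (hQ : 1 + g * w + w ^ 2 ≠ 0) :
    HasDerivAt (fun w => 2 * P w - 2 * g * w * P w / (1 + g * w + w ^ 2))
      (-4 * g * P w / (1 + g * w + w ^ 2) ^ 2) w := by
  have hnum := ((hasDerivAt_id' w).const_mul (2 * g)).fun_mul hP
  refine ((hP.const_mul 2).sub (hnum.div (hasDerivAt_one_add_mul_add_sq g w) hQ)).congr_deriv ?_
  field_simp
  ring
end

/-- Derivative identities `½(V²)′ = w·V²/Q`, `½(V²)″ = (Q - g·w)·V²/Q²` and
`¼(V²)‴ = -g·V²/Q³` for the generating metric function `V(w) = √Q(w)·exp((G/2)Φ(w))`. -/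
theorem stmt_12 (g : ℝ) (hg₁ : -2 < g) (hg₂ : g < 2)
    (h : ℝ) (hh : h = Real.sqrt (1 - g ^ 2 / 4)) (G : ℝ) (hG : G = g / h)
    (Q : ℝ → ℝ) (hQ : Q = fun w => 1 + g * w + w ^ 2)
    (Φ : ℝ → ℝ)
    (hΦ : Φ = fun w => π / 2 + arctan (G / 2) - arctan ((w + g / 2) / h))
    (V : ℝ → ℝ) (hV : V = fun w => Real.sqrt (Q w) * Real.exp (G / 2 * Φ w)) :
    ∀ w : ℝ,
      (1 / 2) * deriv (fun w => V w ^ 2) w = w * V w ^ 2 / Q w ∧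
      (1 / 2) * iteratedDeriv 2 (fun w => V w ^ 2) w = (Q w - g * w) * V w ^ 2 / Q w ^ 2 ∧
      (1 / 4) * iteratedDeriv 3 (fun w => V w ^ 2) w = -g * V w ^ 2 / Q w ^ 3 := by
  have hdisc : 0 < 1 - g ^ 2 / 4 := by nlinarith
  have hQpos (w : ℝ) : 0 < Q w := hQ ▸ one_add_mul_add_sq_pos hg₁ hg₂ w
  set P : ℝ → ℝ := fun w => exp (G * Φ w)
  have hVsq (w : ℝ) : V w ^ 2 = Q w * P w := by
    rw [hV, mul_pow, sq_sqrt (hQpos w).le, ← exp_nat_mul]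
    congr 2
    ring
  simp only [hVsq]
  subst hQ
  beta_reduce at *
  have hP (w : ℝ) : HasDerivAt P (-g * P w / (1 + g * w + w ^ 2)) w := by
    subst hΦ
    exact hasDerivAt_exp_mul_sub_arctan (hh ▸ (sqrt_pos.2 hdisc).ne') (hh ▸ sq_sqrt hdisc.le) hG w
  have hD1 : deriv (fun w => (1 + g * w + w ^ 2) * P w) = fun w => 2 * w * P w :=
    funext fun w => (hasDerivAt_one_add_mul_add_sq_mul (hP w) (hQpos w).ne').deriv
  have hD2 : deriv (fun w => 2 * w * P w) =
      fun w => 2 * P w - 2 * g * w * P w / (1 + g * w + w ^ 2) :=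
    funext fun w => (hasDerivAt_two_mul_mul (hP w)).deriv
  intro w
  have hQw := (hQpos w).ne'
  simp only [iteratedDeriv_succ, iteratedDeriv_zero, hD1, hD2,
    (hasDerivAt_two_mul_sub_div (hP w) hQw).deriv]
  refine ⟨?_, ?_, ?_⟩
  · rw [mul_div_assoc, mul_div_cancel_left₀ _ hQw]
    ring
  all_goals field_simp
end

section
/- Let g be a real number with -2 < g < 2, h = sqrt(1 - g²/4), G = g/h. For s ∈ (0,1) define Φ(s) = π/2 + arctan(G/2) - arctan((sqrt(1-s²) + (g/2)s)/(h·s)) and φ(s) = sqrt(1 + g·s·sqrt(1-s²))·exp((G/2)Φ(s)). Then for every s ∈ (0,1) one has the identity φ(s)·(φ(s) - s·φ′(s)) = exp(G·Φ(s)). -/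
/-!
Write `B(s) = 1 + g s √(1 - s²)`, so that `φ = √B · exp (GΦ/2)` and `φ² = B · exp (GΦ)`.
Since `φ (φ - s φ') = φ² - (s/2) (φ²)'`, the identity reduces to
`B - (s/2) (B' + G Φ' B) = 1`. Differentiating the arctangent gives `Φ' = h / (√(1 - s²) B)`,
so `G Φ' B = g / √(1 - s²)`, and the left side collapses to `1` using `h² + g²/4 = 1`.
-/

open Real

theorem sqrt_mul_exp_mul_sub_deriv {B ψ : ℝ → ℝ} {B' ψ' : ℝ} (c : ℝ) {s : ℝ}
    (hB : HasDerivAt B B' s) (hψ : HasDerivAt ψ ψ' s) (hBs : 0 < B s) :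
    √(B s) * exp (c / 2 * ψ s) *
        (√(B s) * exp (c / 2 * ψ s) - s * deriv (fun x => √(B x) * exp (c / 2 * ψ x)) s) =
      exp (c * ψ s) * (B s - s / 2 * (B' + c * ψ' * B s)) := by
  have hf : HasDerivAt (fun x => √(B x) * exp (c / 2 * ψ x))
      (1 / (2 * √(B s)) * B' * exp (c / 2 * ψ s) +
        √(B s) * (exp (c / 2 * ψ s) * (c / 2 * ψ'))) s :=
    ((hasDerivAt_sqrt hBs.ne').comp s hB).mul ((hψ.const_mul (c / 2)).exp)
  have hsqrt : √(B s) ^ 2 = B s := sq_sqrt hBs.le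
  have hexp : exp (c * ψ s) = exp (c / 2 * ψ s) ^ 2 := by rw [← exp_nat_mul]; ring_nf
  have : √(B s) ≠ 0 := (sqrt_pos.mpr hBs).ne'
  rw [hf.deriv, hexp]
  field_simp
  linear_combination (2 - s * c * ψ') * hsqrt

theorem hasDerivAt_sqrt_one_sub_sq {s : ℝ} (hs : s ^ 2 < 1) :
    HasDerivAt (fun x => √(1 - x ^ 2)) (-s / √(1 - s ^ 2)) s := by
  have hpos : 0 < 1 - s ^ 2 := by linarith
  have := (hasDerivAt_sqrt hpos.ne').comp s ((hasDerivAt_pow 2 s).const_sub 1)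
  refine this.congr_deriv ?_
  have : √(1 - s ^ 2) ≠ 0 := (sqrt_pos.mpr hpos).ne'
  field_simp
  ring

theorem hasDerivAt_one_add_mul_sqrt_one_sub_sq (g : ℝ) {s : ℝ} (hs : s ^ 2 < 1) :
    HasDerivAt (fun x => 1 + g * x * √(1 - x ^ 2))
      (g * (1 - 2 * s ^ 2) / √(1 - s ^ 2)) s := by
  have hpos : 0 < 1 - s ^ 2 := by linarith
  have := (((hasDerivAt_id' s).const_mul g).mul (hasDerivAt_sqrt_one_sub_sq hs)).const_add 1
  refine this.congr_deriv ?_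
  have hr : √(1 - s ^ 2) ^ 2 = 1 - s ^ 2 := sq_sqrt hpos.le
  have : √(1 - s ^ 2) ≠ 0 := (sqrt_pos.mpr hpos).ne'
  field_simp
  linear_combination g * hr

theorem one_add_mul_sqrt_one_sub_sq_pos {g s : ℝ} (hg₁ : -2 < g) (hg₂ : g < 2)
    (hs : s ^ 2 ≤ 1) :
    0 < 1 + g * s * √(1 - s ^ 2) := by
  have hr : √(1 - s ^ 2) ^ 2 = 1 - s ^ 2 := sq_sqrt (by linarith)
  have ht₁ : 0 ≤ 1 + 2 * (s * √(1 - s ^ 2)) := by nlinarith [sq_nonneg (s + √(1 - s ^ 2))]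
  have ht₂ : 0 ≤ 1 - 2 * (s * √(1 - s ^ 2)) := by nlinarith [sq_nonneg (s - √(1 - s ^ 2))]
  -- `4 (1 + g t) = (2 + g)(1 + 2t) + (2 - g)(1 - 2t)` with `t = s √(1 - s²)`
  nlinarith [mul_nonneg (by linarith : (0 : ℝ) ≤ 2 + g) ht₁,
    mul_nonneg (by linarith : (0 : ℝ) ≤ 2 - g) ht₂]

theorem hasDerivAt_sqrt_one_sub_sq_add_div {g h s : ℝ} (hh : h ≠ 0) (hs₀ : s ≠ 0)
    (hs : s ^ 2 < 1) :
    HasDerivAt (fun x => (√(1 - x ^ 2) + g / 2 * x) / (h * x))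
      (-1 / (√(1 - s ^ 2) * h * s ^ 2)) s := by
  have hpos : 0 < 1 - s ^ 2 := by linarith
  have := ((hasDerivAt_sqrt_one_sub_sq hs).add ((hasDerivAt_id' s).const_mul (g / 2))).div
    ((hasDerivAt_id' s).const_mul h) (mul_ne_zero hh hs₀)
  refine this.congr_deriv ?_
  have hr : √(1 - s ^ 2) ^ 2 = 1 - s ^ 2 := sq_sqrt hpos.le
  have : √(1 - s ^ 2) ≠ 0 := (sqrt_pos.mpr hpos).ne'
  simp only [Pi.add_apply]
  field_simp
  linear_combination (-2) * hr

theorem hasDerivAt_const_sub_arctan {g h : ℝ} (C : ℝ) {s : ℝ} (hh : h ^ 2 = 1 - g ^ 2 / 4)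
    (hh₀ : h ≠ 0) (hs₀ : s ≠ 0) (hs : s ^ 2 < 1) :
    HasDerivAt (fun x => C - arctan ((√(1 - x ^ 2) + g / 2 * x) / (h * x)))
      (h / (√(1 - s ^ 2) * (1 + g * s * √(1 - s ^ 2)))) s := by
  have hpos : 0 < 1 - s ^ 2 := by linarith
  have hr : √(1 - s ^ 2) ^ 2 = 1 - s ^ 2 := sq_sqrt hpos.le
  have hr₀ : √(1 - s ^ 2) ≠ 0 := (sqrt_pos.mpr hpos).ne'
  have hsq : 1 + ((√(1 - s ^ 2) + g / 2 * s) / (h * s)) ^ 2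
      = (1 + g * s * √(1 - s ^ 2)) / (h ^ 2 * s ^ 2) := by
    field_simp
    linear_combination (4 * s ^ 2) * hh + 4 * hr
  have hB : 1 + g * s * √(1 - s ^ 2) ≠ 0 := by
    intro h0
    have := hsq ▸ (by positivity : 0 < 1 + ((√(1 - s ^ 2) + g / 2 * s) / (h * s)) ^ 2)
    simp [h0] at this
  refine ((hasDerivAt_sqrt_one_sub_sq_add_div hh₀ hs₀ hs).arctan.const_sub C).congr_deriv ?_
  rw [hsq]
  field_simp

/-- On `0 < s < 1`, the generating metric function `φ(s)` satisfies the identity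
`φ·(φ - s·φ′) = exp(G·Φ)`. -/
theorem stmt_15 (g : ℝ) (hg₁ : -2 < g) (hg₂ : g < 2)
    (h : ℝ) (hh : h = Real.sqrt (1 - g ^ 2 / 4)) (G : ℝ) (hG : G = g / h)
    (Φ : ℝ → ℝ)
    (hΦ : Φ = fun s => π / 2 + arctan (G / 2)
      - arctan ((Real.sqrt (1 - s ^ 2) + g / 2 * s) / (h * s)))
    (φ : ℝ → ℝ)
    (hφ : φ = fun s =>
      Real.sqrt (1 + g * s * Real.sqrt (1 - s ^ 2)) * Real.exp (G / 2 * Φ s)) :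
    ∀ s ∈ Set.Ioo (0 : ℝ) 1,
      φ s * (φ s - s * deriv φ s) = Real.exp (G * Φ s) := by
  rintro s ⟨hs₀, hs₁⟩
  have hg : 0 < 1 - g ^ 2 / 4 := by nlinarith
  have hh₀ : h ≠ 0 := hh ▸ (sqrt_pos.mpr hg).ne'
  have hhsq : h ^ 2 = 1 - g ^ 2 / 4 := hh ▸ sq_sqrt hg.le
  have hs : s ^ 2 < 1 := by nlinarith
  have hr : √(1 - s ^ 2) ^ 2 = 1 - s ^ 2 := sq_sqrt (by linarith)
  have hr₀ : √(1 - s ^ 2) ≠ 0 := (sqrt_pos.mpr (by linarith)).ne'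
  have hB := one_add_mul_sqrt_one_sub_sq_pos hg₁ hg₂ hs.le
  have hΦ' := hΦ ▸ hasDerivAt_const_sub_arctan (π / 2 + arctan (G / 2)) hhsq hh₀ hs₀.ne' hs
  subst hφ hG
  rw [sqrt_mul_exp_mul_sub_deriv (g / h) (hasDerivAt_one_add_mul_sqrt_one_sub_sq g hs) hΦ' hB]
  convert mul_one _ using 2
  field_simp
  linear_combination (2 * g * s) * hr
end
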